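/- arXiv:2401.00626 — 2 statements merged into one kernel-verified Lean document; each statement's English description precedes it below -/
import Mathlib

section
/- For d ∈ {1,2}, the set K_d = {z ∈ ℂ : |z| < |z−λ| for all λ ∈ 𝔬_d with λ ≠ 0} is equal to the open rectangle {x + iy : x, y ∈ ℝ, |x| < 1/2, |y| < √d/2}. -/
open MeasureTheory Filter Topology

noncomputable section

/-- `ω` for the ring of integers of `ℚ(√-d)`. -/
def om (d : ℕ) : ℂ :=
  if d % 4 = 3 then (-1 + Complex.I * Real.sqrt d) / 2 else Complex.I * Real.sqrt d

/-- The ring of integers `𝔬_d = ℤ[ω]` as a subset of `ℂ`. -/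
def Od (d : ℕ) : Set ℂ := {z | ∃ n m : ℤ, z = (n : ℂ) + (m : ℂ) * om d}

/-- The field `ℚ(√-d)` as a subset of `ℂ`. -/
def Qd (d : ℕ) : Set ℂ := {z | ∃ a b : ℚ, z = (a : ℂ) + (b : ℂ) * om d}

/-- The open Dirichlet fundamental domain `K_d` centred at the origin. -/
def Kd (d : ℕ) : Set ℂ :=
  {z | ∀ lam ∈ Od d, lam ≠ 0 → ‖z‖ < ‖z - lam‖}

/-- The complex Gauss map associated with a nearest-integer map `fl`. -/
def gauss (fl : ℂ → ℂ) (z : ℂ) : ℂ := if z = 0 then 0 else 1 / z - fl (1 / z)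

/-- The `n`-th digit `a_n(z)` (for `n ≥ 1`) of the nearest-integer continued fraction. -/
def digit (fl : ℂ → ℂ) (n : ℕ) (z : ℂ) : ℂ := fl (1 / (gauss fl)^[n - 1] z)

/-- Auxiliary recursion producing `((p_{n-2}, q_{n-2}), (p_{n-1}, q_{n-1}))` at index `n`. -/
def convAux (a : ℕ → ℂ) : ℕ → (ℂ × ℂ) × (ℂ × ℂ)
  | 0 => ((0, 1), (1, 0))
  | n + 1 => ((convAux a n).2,
      (a n * (convAux a n).2.1 + (convAux a n).1.1,
       a n * (convAux a n).2.2 + (convAux a n).1.2))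

/-- The digit sequence of `z`, with `a_0 = 0`. -/
def aseq (fl : ℂ → ℂ) (z : ℂ) : ℕ → ℂ := fun k => if k = 0 then 0 else digit fl k z

/-- Numerator `p_n` of the `n`-th convergent of `z`. -/
def pconv (fl : ℂ → ℂ) (z : ℂ) (n : ℕ) : ℂ := (convAux (aseq fl z) (n + 1)).2.1

/-- Denominator `q_n` of the `n`-th convergent of `z`. -/
def qconv (fl : ℂ → ℂ) (z : ℂ) (n : ℕ) : ℂ := (convAux (aseq fl z) (n + 1)).2.2

/-- `p_{n-1}` (so `pprev fl z 0 = p_{-1} = 1`). -/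
def pprev (fl : ℂ → ℂ) (z : ℂ) (n : ℕ) : ℂ := (convAux (aseq fl z) (n + 1)).1.1

/-- `q_{n-1}` (so `qprev fl z 0 = q_{-1} = 0`). -/
def qprev (fl : ℂ → ℂ) (z : ℂ) (n : ℕ) : ℂ := (convAux (aseq fl z) (n + 1)).1.2

/-!
For `d ∈ {1, 2}` the lattice `𝔬_d = ℤ + ℤ √d i` is rectangular. Squaring, `‖z‖ < ‖z - λ‖` reads
`2 ⟨z, λ⟩ < ‖λ‖²`, and for `λ = n + m c i` this splits into `2 x n ≤ n²` and `2 y m c ≤ (m c)²`,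
both of which hold on the rectangle because `|k| ≤ k²` for integers `k`, strictly when `k ≠ 0`.
Conversely the four nearest lattice points `±1`, `±c i` already cut out the rectangle.
-/

lemma norm_lt_norm_sub_iff (z w : ℂ) :
    ‖z‖ < ‖z - w‖ ↔ 2 * z.re * w.re + 2 * z.im * w.im < w.re ^ 2 + w.im ^ 2 := by
  rw [← sq_lt_sq₀ (norm_nonneg _) (norm_nonneg _), Complex.sq_norm, Complex.sq_norm,
    Complex.normSq_apply, Complex.normSq_apply, Complex.sub_re, Complex.sub_im]
  constructor <;> intro h <;> nlinarith

lemma two_mul_mul_intCast_mul_lt_sq {t c : ℝ} (ht : |t| < c / 2) {k : ℤ} (hk : k ≠ 0) :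
    2 * t * (k * c) < (k * c) ^ 2 := by
  have hc : 0 < c := by linarith [abs_nonneg t]
  have hk1 : (1 : ℝ) ≤ |(k : ℝ)| := by exact_mod_cast Int.one_le_abs hk
  have hkc : c ≤ |k * c| := by
    rw [abs_mul, abs_of_pos hc]; nlinarith
  calc 2 * t * (k * c) ≤ 2 * |t| * |k * c| := by
        rw [mul_assoc, mul_assoc, ← abs_mul]
        exact mul_le_mul_of_nonneg_left (le_abs_self _) zero_le_two
    _ < c * |k * c| := by gcongr; linarith
    _ ≤ |k * c| * |k * c| := by gcongr
    _ = (k * c) ^ 2 := by rw [abs_mul_abs_self, sq]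

lemma two_mul_mul_intCast_mul_le_sq {t c : ℝ} (ht : |t| < c / 2) (k : ℤ) :
    2 * t * (k * c) ≤ (k * c) ^ 2 := by
  rcases eq_or_ne k 0 with rfl | hk
  · simp
  · exact (two_mul_mul_intCast_mul_lt_sq ht hk).le

theorem dirichlet_domain_rectangular_lattice {c : ℝ} (hc : 0 < c) :
    {z : ℂ | ∀ n m : ℤ, (n + m * (c * Complex.I) : ℂ) ≠ 0 →
        ‖z‖ < ‖z - (n + m * (c * Complex.I))‖} =
      {z : ℂ | |z.re| < 1 / 2 ∧ |z.im| < c / 2} := by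
  have hre (n m : ℤ) : (n + m * (c * Complex.I) : ℂ).re = n := by simp
  have him (n m : ℤ) : (n + m * (c * Complex.I) : ℂ).im = m * c := by simp
  ext z
  simp only [Set.mem_ofPred_eq, norm_lt_norm_sub_iff, hre, him]
  constructor
  · intro h
    have h₁ := h 1 0 (by simp)
    have h₂ := h (-1) 0 (by simp)
    have h₃ := h 0 1 (by simp [hc.ne'])
    have h₄ := h 0 (-1) (by simp [hc.ne'])
    push_cast at h₁ h₂ h₃ h₄
    refine ⟨abs_lt.2 ⟨?_, ?_⟩, abs_lt.2 ⟨?_, ?_⟩⟩ <;> nlinarith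
  · rintro ⟨hx, hy⟩ n m hne
    have hnm : n ≠ 0 ∨ m ≠ 0 := by
      by_contra! h0
      simp [h0.1, h0.2] at hne
    rcases hnm with hn | hm
    · have := two_mul_mul_intCast_mul_lt_sq hx hn
      have := two_mul_mul_intCast_mul_le_sq hy m
      linarith
    · have := two_mul_mul_intCast_mul_le_sq hx n
      have := two_mul_mul_intCast_mul_lt_sq hy hm
      linarith

lemma om_of_mod_four_ne_three {d : ℕ} (hd : d % 4 ≠ 3) : om d = Real.sqrt d * Complex.I := by
  rw [om, if_neg hd, mul_comm]

/-- for `d = 1, 2`, the Dirichlet fundamental domain `K_d` is the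
open rectangle `{x + iy : |x| < 1/2, |y| < √d/2}`. -/
theorem Kd_eq_rectangle (d : ℕ) (hd : d = 1 ∨ d = 2) :
    Kd d = {z : ℂ | |z.re| < 1 / 2 ∧ |z.im| < Real.sqrt d / 2} := by
  have hmod : d % 4 ≠ 3 := by rcases hd with rfl | rfl <;> decide
  have hpos : 0 < Real.sqrt d := Real.sqrt_pos.2 (by rcases hd with rfl | rfl <;> norm_num)
  rw [← dirichlet_domain_rectangular_lattice hpos, Kd, Od, om_of_mod_four_ne_three hmod]
  ext z
  simp only [Set.mem_ofPred_eq]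
  exact ⟨fun h n m hne => h _ ⟨n, m, rfl⟩ hne, fun h _ ⟨n, m, hlam⟩ hne => hlam ▸ h n m (hlam ▸ hne)⟩

end
end

section
/- Let d ∈ {1,2,3,7,11}. There exist a real number r_d > 1 and a natural number M_d such that for every z ∈ K_d with z ∉ ℚ(√−d) there exists a strictly increasing sequence of positive integers (n_k)_{k∈ℕ} satisfying 1 ≤ n_{k+1} − n_k ≤ M_d and |q_{n_k}| ≥ r_d · |q_{n_k − 1}| for all k ∈ ℕ, where (q_n) are the denominators of the convergents of the nearest-integer 𝔬_d-continued fraction expansion of z. -/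
open MeasureTheory Filter Topology

noncomputable section

/-!
Write `x_n = q_n z - p_n`. Along the orbit of the Gauss map `x_n = -Gⁿ(z) x_{n-1}`, and
`closure K_d` lies in the disc of radius `ρ = 0.91`, so `|x_n|` decays at least like `ρⁿ`.
The determinant identity `q_n x_{n-1} - q_{n-1} x_n = ±1` then keeps
`B_n = |q_n| |x_{n-1}|` below `1 / (1 - ρ²)`, and forces `|q_{n+1}| ≥ r |q_n|` as soon as
`B_n` is small. If `|q_n|` grew by less than the factor `r` (with `r ρ < 1`) for `M` steps
in a row, `B_n` would have shrunk by `(r ρ)^M`, so a growth step occurs in every window of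
length `M + 1`. Irrationality of `z` is what keeps the orbit away from `0`: `Gⁿ(z) = 0`
would give `z = p_n / q_n`.
-/

open ComplexConjugate

/-- The pair `Q n = |q_n|`, `X n = |x_{n-1}|`: `X` decays at rate `ρ` and the last two fields
are what the determinant identity gives. -/
structure ConvergentBounds (ρ : ℝ) (Q X : ℕ → ℝ) : Prop where
  pos : ∀ n, 0 < X n
  le_mul : ∀ n, X (n + 1) ≤ ρ * X n
  nonneg : ∀ n, 0 ≤ Q n
  abs_mul_sub_one_le : ∀ n, |Q (n + 1) * X (n + 1) - 1| ≤ Q n * X (n + 2)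
  mul_le_one : Q 0 * X 0 ≤ 1

namespace ConvergentBounds

variable {ρ r : ℝ} {Q X : ℕ → ℝ}

lemma le_sq_mul (h : ConvergentBounds ρ Q X) (hρ : 0 ≤ ρ) (n : ℕ) :
    X (n + 2) ≤ ρ ^ 2 * X n :=
  calc X (n + 2) ≤ ρ * X (n + 1) := h.le_mul _
    _ ≤ ρ * (ρ * X n) := mul_le_mul_of_nonneg_left (h.le_mul n) hρ
    _ = ρ ^ 2 * X n := by ring

lemma mul_le_inv_one_sub_sq (h : ConvergentBounds ρ Q X) (hρ0 : 0 ≤ ρ) (hρ1 : ρ < 1)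
    (n : ℕ) : Q n * X n ≤ (1 - ρ ^ 2)⁻¹ := by
  have hβ : 0 < 1 - ρ ^ 2 := by nlinarith
  induction n with
  | zero => exact h.mul_le_one.trans ((one_le_inv₀ hβ).2 (by nlinarith))
  | succ n ih =>
    have hstep := (abs_le.1 (h.abs_mul_sub_one_le n)).2
    have hdecay := mul_le_mul_of_nonneg_left (h.le_sq_mul hρ0 n) (h.nonneg n)
    calc Q (n + 1) * X (n + 1) ≤ 1 + ρ ^ 2 * (Q n * X n) := by linarith
      _ ≤ 1 + ρ ^ 2 * (1 - ρ ^ 2)⁻¹ := by gcongr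
      _ = (1 - ρ ^ 2)⁻¹ := by field_simp; ring

lemma mul_le_succ_of_mul_le_one (h : ConvergentBounds ρ Q X) (hρ : 0 ≤ ρ) (hr : 0 ≤ r)
    {n : ℕ} (hn : (ρ ^ 2 + r * ρ) * (Q n * X n) ≤ 1) : r * Q n ≤ Q (n + 1) := by
  have hstep := (abs_le.1 (h.abs_mul_sub_one_le n)).1
  have hdecay := mul_le_mul_of_nonneg_left (h.le_sq_mul hρ n) (h.nonneg n)
  have hnext := mul_le_mul_of_nonneg_left (h.le_mul n) (mul_nonneg hr (h.nonneg n))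
  refine le_of_mul_le_mul_right ?_ (h.pos (n + 1))
  nlinarith

lemma exists_mul_le_of_pow_le (h : ConvergentBounds ρ Q X) (hρ0 : 0 ≤ ρ) (hρ1 : ρ < 1)
    (hr : 0 ≤ r) {m : ℕ} (hm : (ρ ^ 2 + r * ρ) * ((r * ρ) ^ m * (1 - ρ ^ 2)⁻¹) ≤ 1)
    (n : ℕ) : ∃ j, n < j ∧ j ≤ n + (m + 1) ∧ r * Q (j - 1) ≤ Q j := by
  by_cases hgood : ∃ j, n < j ∧ j ≤ n + m ∧ r * Q (j - 1) ≤ Q j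
  · obtain ⟨j, hnj, hjm, hj⟩ := hgood
    exact ⟨j, hnj, by omega, hj⟩
  push Not at hgood
  have hQ : Q (n + m) ≤ r ^ m * Q n :=
    le_geom (u := fun k => Q (n + k)) hr m fun k hk => by
      rw [← add_assoc]
      simpa using (hgood (n + k + 1) (by omega) (by omega)).le
  have hX : X (n + m) ≤ ρ ^ m * X n :=
    le_geom (u := fun k => X (n + k)) hρ0 m fun k _ => h.le_mul (n + k)
  have hB : Q (n + m) * X (n + m) ≤ (r * ρ) ^ m * (1 - ρ ^ 2)⁻¹ :=
    calc Q (n + m) * X (n + m) ≤ (r ^ m * Q n) * (ρ ^ m * X n) :=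
          mul_le_mul hQ hX (h.pos _).le (by have := h.nonneg n; positivity)
      _ = (r * ρ) ^ m * (Q n * X n) := by ring
      _ ≤ (r * ρ) ^ m * (1 - ρ ^ 2)⁻¹ := by
          gcongr
          exact h.mul_le_inv_one_sub_sq hρ0 hρ1 n
  refine ⟨n + m + 1, by omega, by omega, ?_⟩
  rw [Nat.add_sub_cancel]
  exact h.mul_le_succ_of_mul_le_one hρ0 hr
    ((mul_le_mul_of_nonneg_left hB (by positivity)).trans hm)

lemma exists_uniform_gap (hρ0 : 0 ≤ ρ) (hρ1 : ρ < 1) :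
    ∃ r : ℝ, 1 < r ∧ ∃ M : ℕ, ∀ Q X : ℕ → ℝ, ConvergentBounds ρ Q X →
      ∀ n, ∃ j, n < j ∧ j ≤ n + M ∧ r * Q (j - 1) ≤ Q j := by
  -- any `1 < r < 1 / ρ` works
  set r : ℝ := 2 / (1 + ρ)
  have hr1 : 1 < r := by rw [lt_div_iff₀ (by linarith)]; linarith
  have hrρ : r * ρ < 1 := by rw [div_mul_eq_mul_div, div_lt_one (by linarith)]; linarith
  set c := (ρ ^ 2 + r * ρ) * (1 - ρ ^ 2)⁻¹
  have hc : 0 ≤ c := mul_nonneg (by positivity) (inv_nonneg.2 (by nlinarith))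
  obtain ⟨m, hm⟩ := exists_pow_lt_of_lt_one (inv_pos.2 (by linarith : 0 < c + 1)) hrρ
  refine ⟨r, hr1, m + 1, fun Q X h => h.exists_mul_le_of_pow_le hρ0 hρ1 (by linarith) ?_⟩
  have hpow : 0 ≤ (r * ρ) ^ m := by positivity
  calc (ρ ^ 2 + r * ρ) * ((r * ρ) ^ m * (1 - ρ ^ 2)⁻¹) = c * (r * ρ) ^ m := by ring
    _ ≤ (c + 1) * (c + 1)⁻¹ := by gcongr; linarith
    _ = 1 := mul_inv_cancel₀ (by linarith)

end ConvergentBounds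

lemma exists_strictMono_of_forall_exists_gap_le {P : ℕ → Prop} {M : ℕ}
    (h : ∀ n, ∃ j, n < j ∧ j ≤ n + M ∧ P j) :
    ∃ nk : ℕ → ℕ, StrictMono nk ∧ (∀ k, 1 ≤ nk k) ∧ (∀ k, nk (k + 1) - nk k ≤ M) ∧
      ∀ k, P (nk k) := by
  choose f hlt hle hP using h
  refine ⟨fun k => f^[k + 1] 0, strictMono_nat_of_lt_succ fun k => ?_, fun k => ?_,
    fun k => ?_, fun k => ?_⟩ <;> simp only [Function.iterate_succ_apply']
  · exact hlt _
  · exact (hlt _).trans_le' (Nat.zero_le _)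
  · have := hle (f (f^[k] 0)); omega
  · exact hP _

lemma om_re (d : ℕ) : (om d).re = if d % 4 = 3 then -1 / 2 else 0 := by
  unfold om; split_ifs <;> simp

lemma om_im (d : ℕ) : (om d).im = if d % 4 = 3 then √d / 2 else √d := by
  unfold om; split_ifs <;> simp

lemma om_im_pos {d : ℕ} (hd : 0 < d) : 0 < (om d).im := by
  have : 0 < √(d : ℝ) := Real.sqrt_pos.2 (by exact_mod_cast hd)
  rw [om_im]; split_ifs <;> positivity

lemma exists_om_sq_eq (d : ℕ) : ∃ s t : ℤ, om d ^ 2 = t + s * om d := by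
  have hI := Complex.I_sq
  have hs : ((√(d : ℝ) : ℝ) : ℂ) ^ 2 = d := by
    norm_cast; exact Real.sq_sqrt (Nat.cast_nonneg d)
  unfold om
  split_ifs with h
  · refine ⟨-1, -(((d : ℤ) + 1) / 4), ?_⟩
    have h4 : (((d : ℤ) + 1) / 4) * 4 = d + 1 := by omega
    have hc : ((((d : ℤ) + 1) / 4 : ℤ) : ℂ) = (d + 1) / 4 := by
      rw [eq_div_iff (by norm_num)]; exact_mod_cast h4
    push_cast [hc]
    linear_combination (↑√(d : ℝ) ^ 2 / 4 : ℂ) * hI + (-1 / 4 : ℂ) * hs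
  · refine ⟨0, -d, ?_⟩
    push_cast
    linear_combination (↑√(d : ℝ) ^ 2 : ℂ) * hI - hs

lemma exists_conj_om_eq (d : ℕ) : ∃ s : ℤ, conj (om d) = s - om d := by
  unfold om
  split_ifs
  · exact ⟨-1, by simp [map_div₀, map_ofNat]; ring⟩
  · exact ⟨0, by simp⟩

def subringOd (d : ℕ) : Subring ℂ where
  carrier := Od d
  zero_mem' := ⟨0, 0, by simp⟩
  one_mem' := ⟨1, 0, by simp⟩
  add_mem' := by
    rintro _ _ ⟨a, b, rfl⟩ ⟨c, e, rfl⟩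
    exact ⟨a + c, b + e, by push_cast; ring⟩
  neg_mem' := by
    rintro _ ⟨a, b, rfl⟩
    exact ⟨-a, -b, by push_cast; ring⟩
  mul_mem' := by
    obtain ⟨s, t, hst⟩ := exists_om_sq_eq d
    rintro _ _ ⟨a, b, rfl⟩ ⟨c, e, rfl⟩
    exact ⟨a * c + b * e * t, a * e + b * c + b * e * s, by
      push_cast; linear_combination (b * e : ℂ) * hst⟩

lemma conj_mem_Od {d : ℕ} {w : ℂ} (hw : w ∈ Od d) : conj w ∈ Od d := by
  obtain ⟨a, b, rfl⟩ := hw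
  obtain ⟨s, hs⟩ := exists_conj_om_eq d
  exact ⟨a + b * s, -b, by simp [hs]; ring⟩

lemma exists_eq_intCast_of_mem_Od {d : ℕ} (hd : 0 < d) {w : ℂ} (hw : w ∈ Od d)
    (him : w.im = 0) : ∃ N : ℤ, w = N := by
  obtain ⟨a, b, rfl⟩ := hw
  have hb : b = 0 := by simpa [(om_im_pos hd).ne'] using him
  exact ⟨a, by simp [hb]⟩

-- `z = p q̄ / (q q̄)` and `q q̄` is a rational integer.
lemma mem_Qd_of_mul_eq {d : ℕ} (hd : 0 < d) {p q z : ℂ} (hp : p ∈ Od d) (hq : q ∈ Od d)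
    (hq0 : q ≠ 0) (h : q * z = p) : z ∈ Qd d := by
  have hnorm : q * conj q ∈ subringOd d := mul_mem hq (conj_mem_Od hq)
  obtain ⟨N, hN⟩ := exists_eq_intCast_of_mem_Od hd hnorm (by simp [Complex.mul_conj])
  obtain ⟨a, b, hab⟩ : p * conj q ∈ subringOd d := mul_mem hp (conj_mem_Od hq)
  have hN0 : (N : ℂ) ≠ 0 := hN ▸ mul_ne_zero hq0 ((map_ne_zero _).2 hq0)
  refine ⟨a / N, b / N, ?_⟩
  have hz : z = p * conj q / (q * conj q) := by
    rw [← h]; field_simp [(map_ne_zero _).2 hq0]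
  rw [hz, hN, hab]
  push_cast
  field_simp

lemma zero_mem_Kd (d : ℕ) : (0 : ℂ) ∈ Kd d := fun _ _ h0 => by simpa using h0

lemma norm_le_norm_sub_of_mem_closure_Kd {d : ℕ} {w c : ℂ} (hw : w ∈ closure (Kd d))
    (hc : c ∈ Od d) (hc0 : c ≠ 0) : ‖w‖ ≤ ‖w - c‖ :=
  closure_minimal (fun _ hu => (hu c hc hc0).le)
    (isClosed_le continuous_norm (continuous_id.sub continuous_const).norm) hw

lemma inner_le_of_mem_closure_Kd {d : ℕ} (hd : 0 < d) {w : ℂ} (hw : w ∈ closure (Kd d))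
    (n m : ℤ) (hnm : n ≠ 0 ∨ m ≠ 0) :
    2 * (w.re * (n + m * (om d).re) + w.im * (m * (om d).im)) ≤
      (n + m * (om d).re) ^ 2 + (m * (om d).im) ^ 2 := by
  have hc0 : (n + m * om d : ℂ) ≠ 0 := by
    intro h0
    have him : (m : ℝ) * (om d).im = 0 := by simpa using congrArg Complex.im h0
    have hm : m = 0 := by exact_mod_cast (mul_eq_zero.1 him).resolve_right (om_im_pos hd).ne'
    subst hm
    exact hnm.resolve_right (not_not.2 rfl) (by simpa using h0)
  have h := pow_le_pow_left₀ (norm_nonneg _)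
    (norm_le_norm_sub_of_mem_closure_Kd hw ⟨n, m, rfl⟩ hc0) 2
  simp only [Complex.sq_norm, Complex.normSq_apply, Complex.sub_re, Complex.sub_im,
    Complex.add_re, Complex.add_im, Complex.mul_re, Complex.mul_im, Complex.intCast_re,
    Complex.intCast_im] at h
  nlinarith

/-- The neighbours `±1, ±ω, ±(1 + ω)` already cut `K_d` down to a polygon of circumradius
at most `√(9/11) < 0.91`, the worst case being `d = 11`. -/
lemma norm_le_of_mem_closure_Kd {d : ℕ} (hd : d = 1 ∨ d = 2 ∨ d = 3 ∨ d = 7 ∨ d = 11)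
    {w : ℂ} (hw : w ∈ closure (Kd d)) : ‖w‖ ≤ 91 / 100 := by
  have hd0 : 0 < d := by omega
  have key := inner_le_of_mem_closure_Kd hd0 hw
  have hs : √(d : ℝ) ^ 2 = d := Real.sq_sqrt (Nat.cast_nonneg d)
  have hs0 : 0 < √(d : ℝ) := Real.sqrt_pos.2 (by exact_mod_cast hd0)
  suffices w.re ^ 2 + w.im ^ 2 ≤ (91 / 100) ^ 2 by
    refine le_of_pow_le_pow_left₀ two_ne_zero (by norm_num) ?_
    rwa [Complex.sq_norm, Complex.normSq_apply, ← sq, ← sq]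
  have h1 := key 1 0 (by norm_num)
  have h2 := key (-1) 0 (by norm_num)
  have h3 := key 0 1 (by norm_num)
  have h4 := key 0 (-1) (by norm_num)
  have h5 := key 1 1 (by norm_num)
  have h6 := key (-1) (-1) (by norm_num)
  simp only [om_re, om_im] at h1 h2 h3 h4 h5 h6
  generalize √(d : ℝ) = s at hs hs0 h1 h2 h3 h4 h5 h6
  generalize w.re = x at h1 h2 h3 h4 h5 h6 ⊢
  generalize w.im = y at h1 h2 h3 h4 h5 h6 ⊢
  rcases hd with rfl | rfl | rfl | rfl | rfl <;> norm_num at h1 h2 h3 h4 h5 h6 hs ⊢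
  · obtain rfl : s = 1 := hs.resolve_right (by linarith)
    nlinarith
  · have hy := congrArg (y ^ 2 * ·) hs
    nlinarith [mul_nonneg (sub_nonneg.2 h3) (sub_nonneg.2 h4),
      mul_nonneg (sub_nonneg.2 h1) (sub_nonneg.2 h2)]
  all_goals
    have hy := congrArg (y ^ 2 * ·) hs
    rcases le_total x 0 with hx | hx
    · nlinarith [mul_nonneg (sub_nonneg.2 h3) (sub_nonneg.2 h6),
        mul_nonneg (neg_nonneg.2 hx) (sub_nonneg.2 h2)]
    · nlinarith [mul_nonneg (sub_nonneg.2 h4) (sub_nonneg.2 h5),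
        mul_nonneg hx (sub_nonneg.2 h1)]

def xconv (fl : ℂ → ℂ) (z : ℂ) (n : ℕ) : ℂ := qconv fl z n * z - pconv fl z n

def xprev (fl : ℂ → ℂ) (z : ℂ) (n : ℕ) : ℂ := qprev fl z n * z - pprev fl z n

section ContinuedFraction

variable (fl : ℂ → ℂ) (z : ℂ)

lemma pconv_succ (n : ℕ) :
    pconv fl z (n + 1) = aseq fl z (n + 1) * pconv fl z n + pprev fl z n := rfl

lemma qconv_succ (n : ℕ) :
    qconv fl z (n + 1) = aseq fl z (n + 1) * qconv fl z n + qprev fl z n := rfl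

lemma qprev_succ (n : ℕ) : qprev fl z (n + 1) = qconv fl z n := rfl

lemma qconv_zero : qconv fl z 0 = 1 := by simp [qconv, convAux, aseq]

lemma xprev_zero : xprev fl z 0 = -1 := by simp [xprev, pprev, qprev, convAux]

lemma xprev_succ (n : ℕ) : xprev fl z (n + 1) = xconv fl z n := rfl

lemma xconv_succ (n : ℕ) :
    xconv fl z (n + 1) = aseq fl z (n + 1) * xconv fl z n + xprev fl z n := by
  simp only [xconv, xprev, pconv_succ, qconv_succ]; ring

lemma aseq_succ_eq {n : ℕ} (hw : (gauss fl)^[n] z ≠ 0) :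
    aseq fl z (n + 1) = 1 / (gauss fl)^[n] z - (gauss fl)^[n + 1] z := by
  rw [Function.iterate_succ_apply', gauss, if_neg hw]
  simp [aseq, digit]

lemma qconv_mul_xprev_sub_qprev_mul_xconv (n : ℕ) :
    qconv fl z n * xprev fl z n - qprev fl z n * xconv fl z n = (-1) ^ (n + 1) := by
  induction n with
  | zero => simp [qconv_zero, xprev_zero, qprev, convAux]
  | succ n ih =>
    rw [qconv_succ, qprev_succ, xprev_succ, xconv_succ]
    linear_combination (-1 : ℂ) * ih

lemma xconv_eq_neg_mul_xprev {n : ℕ} (hw : ∀ k < n, (gauss fl)^[k] z ≠ 0) :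
    xconv fl z n = -(gauss fl)^[n] z * xprev fl z n := by
  induction n with
  | zero => simp [xconv, xprev_zero, pconv, qconv, convAux, aseq]
  | succ n ih =>
    have hwn := hw n n.lt_succ_self
    rw [xconv_succ, aseq_succ_eq fl z hwn, xprev_succ,
      ih fun k hk => hw k (hk.trans n.lt_succ_self)]
    field_simp
    ring

lemma abs_norm_mul_xprev_sub_one_le (n : ℕ) :
    |‖qconv fl z (n + 1)‖ * ‖xprev fl z (n + 1)‖ - 1| ≤
      ‖qconv fl z n‖ * ‖xprev fl z (n + 2)‖ := by
  have hW := qconv_mul_xprev_sub_qprev_mul_xconv fl z (n + 1)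
  rw [qprev_succ, ← xprev_succ] at hW
  have hdiff : qconv fl z (n + 1) * xprev fl z (n + 1) - (-1) ^ (n + 2) =
      qconv fl z n * xprev fl z (n + 2) := by
    linear_combination hW
  rw [← norm_mul, ← norm_mul, ← hdiff]
  simpa using abs_norm_sub_norm_le (qconv fl z (n + 1) * xprev fl z (n + 1)) ((-1 : ℂ) ^ (n + 2))

lemma convAux_mem (S : Subring ℂ) {a : ℕ → ℂ} (ha : ∀ n, a n ∈ S) (n : ℕ) :
    (convAux a n).1.1 ∈ S ∧ (convAux a n).1.2 ∈ S ∧ (convAux a n).2.1 ∈ S ∧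
      (convAux a n).2.2 ∈ S := by
  induction n with
  | zero => exact ⟨zero_mem S, one_mem S, one_mem S, zero_mem S⟩
  | succ n ih =>
    obtain ⟨hp', hq', hp, hq⟩ := ih
    exact ⟨hp, hq, add_mem (mul_mem (ha n) hp) hp', add_mem (mul_mem (ha n) hq) hq'⟩

end ContinuedFraction

section Orbit

variable {d : ℕ} {fl : ℂ → ℂ} {z : ℂ}

lemma convergents_mem_Od (hmem : ∀ u, fl u ∈ Od d) (n : ℕ) :
    pconv fl z n ∈ Od d ∧ qconv fl z n ∈ Od d := by
  have ha (k : ℕ) : aseq fl z k ∈ subringOd d := by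
    unfold aseq
    split_ifs
    exacts [zero_mem _, hmem _]
  exact (convAux_mem (subringOd d) ha (n + 1)).2.2

lemma iterate_gauss_ne_zero (hd : 0 < d) (hmem : ∀ u, fl u ∈ Od d) (hirr : z ∉ Qd d)
    (n : ℕ) : (gauss fl)^[n] z ≠ 0 := by
  induction n using Nat.strong_induction_on with
  | _ n ih =>
    intro h0
    have hx : xconv fl z n = 0 := by rw [xconv_eq_neg_mul_xprev fl z ih, h0]; ring
    have hW := qconv_mul_xprev_sub_qprev_mul_xconv fl z n
    rw [hx, mul_zero, sub_zero] at hW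
    have hq0 : qconv fl z n ≠ 0 := left_ne_zero_of_mul (hW ▸ pow_ne_zero _ (by norm_num))
    obtain ⟨hp, hq⟩ := convergents_mem_Od hmem n
    exact hirr (mem_Qd_of_mul_eq hd hp hq hq0 (sub_eq_zero.1 hx))

lemma norm_xprev_succ (hw : ∀ n, (gauss fl)^[n] z ≠ 0) (n : ℕ) :
    ‖xprev fl z (n + 1)‖ = ‖(gauss fl)^[n] z‖ * ‖xprev fl z n‖ := by
  rw [xprev_succ, xconv_eq_neg_mul_xprev fl z fun k _ => hw k, norm_mul, norm_neg]

lemma xprev_ne_zero (hw : ∀ n, (gauss fl)^[n] z ≠ 0) (n : ℕ) : xprev fl z n ≠ 0 := by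
  induction n with
  | zero => simp [xprev_zero]
  | succ n ih =>
    rw [xprev_succ, xconv_eq_neg_mul_xprev fl z fun k _ => hw k]
    exact mul_ne_zero (neg_ne_zero.2 (hw n)) ih

lemma gauss_mem_closure_Kd (hnear : ∀ u, u - fl u ∈ closure (Kd d)) (w : ℂ) :
    gauss fl w ∈ closure (Kd d) := by
  unfold gauss
  split_ifs
  exacts [subset_closure (zero_mem_Kd d), hnear _]

lemma convergentBounds_qconv_xprev (hd : d = 1 ∨ d = 2 ∨ d = 3 ∨ d = 7 ∨ d = 11)
    (hmem : ∀ u, fl u ∈ Od d) (hnear : ∀ u, u - fl u ∈ closure (Kd d)) (hz : z ∈ Kd d)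
    (hirr : z ∉ Qd d) :
    ConvergentBounds (91 / 100) (fun n => ‖qconv fl z n‖) (fun n => ‖xprev fl z n‖) := by
  have hw := iterate_gauss_ne_zero (by omega) hmem hirr
  have horbit : Set.MapsTo (gauss fl) (closure (Kd d)) (closure (Kd d)) :=
    fun w _ => gauss_mem_closure_Kd hnear w
  refine ⟨fun n => norm_pos_iff.2 (xprev_ne_zero hw n), fun n => ?_, fun n => norm_nonneg _,
    abs_norm_mul_xprev_sub_one_le fl z, by simp [qconv_zero, xprev_zero]⟩
  rw [norm_xprev_succ hw]
  exact mul_le_mul_of_nonneg_right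
    (norm_le_of_mem_closure_Kd hd (horbit.iterate n (subset_closure hz))) (norm_nonneg _)

end Orbit

theorem subsequence_of_multiplicative_growth_general
    (d : ℕ) (hd : d = 1 ∨ d = 2 ∨ d = 3 ∨ d = 7 ∨ d = 11)
    (fl : ℂ → ℂ)
    (hfl_mem : ∀ z : ℂ, fl z ∈ Od d)
    (hfl_near : ∀ z : ℂ, z - fl z ∈ closure (Kd d)) :
    ∃ r : ℝ, 1 < r ∧ ∃ M : ℕ,
      ∀ z ∈ Kd d, z ∉ Qd d →
        ∃ nk : ℕ → ℕ, StrictMono nk ∧ (∀ k, 1 ≤ nk k) ∧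
          (∀ k, nk (k + 1) - nk k ≤ M) ∧
          (∀ k, r * ‖qconv fl z (nk k - 1)‖ ≤
            ‖qconv fl z (nk k)‖) := by
  obtain ⟨r, hr, M, hwindow⟩ :=
    ConvergentBounds.exists_uniform_gap (ρ := 91 / 100) (by norm_num) (by norm_num)
  exact ⟨r, hr, M, fun z hz hirr => exists_strictMono_of_forall_exists_gap_le
    (hwindow _ _ (convergentBounds_qconv_xprev hd hfl_mem hfl_near hz hirr))⟩

/-- a subsequence of multiplicative denominator growth with
bounded gaps: there are `r_d > 1` and `M_d ∈ ℕ` such that every irrational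
`z ∈ K_d` admits a strictly increasing sequence `(n_k)` of positive integers
with `n_{k+1} − n_k ≤ M_d` and `|q_{n_k}| ≥ r_d |q_{n_k − 1}|`. -/
theorem subsequence_of_multiplicative_growth
    (d : ℕ) (hd : d = 1 ∨ d = 2 ∨ d = 3 ∨ d = 7 ∨ d = 11)
    (fl : ℂ → ℂ) (hfl_meas : Measurable fl)
    (hfl_mem : ∀ z : ℂ, fl z ∈ Od d)
    (hfl_near : ∀ z : ℂ, z - fl z ∈ closure (Kd d)) :
    ∃ r : ℝ, 1 < r ∧ ∃ M : ℕ,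
      ∀ z ∈ Kd d, z ∉ Qd d →
        ∃ nk : ℕ → ℕ, StrictMono nk ∧ (∀ k, 1 ≤ nk k) ∧
          (∀ k, nk (k + 1) - nk k ≤ M) ∧
          (∀ k, r * ‖qconv fl z (nk k - 1)‖ ≤
            ‖qconv fl z (nk k)‖) :=
  subsequence_of_multiplicative_growth_general d hd fl hfl_mem hfl_near

end
end
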